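/- Let A ∈ ℝ^{n×n}, t ≥ 0, and b_c, b_Δ ∈ ℝ^n with (b_Δ)_i ≥ 0 for all i; let |A| be the entrywise absolute value of A. Suppose V ∈ ℝ^{n×ξ}, H ∈ ℝ^{ξ×ξ} and ε ≥ 0 satisfy ‖exp(A t) b_c − ‖b_c‖ V exp(H t) e₁‖ ≤ ‖b_c‖ ε t, and V̄ ∈ ℝ^{n×ξ}, H̄ ∈ ℝ^{ξ×ξ} and ε̄ ≥ 0 satisfy ‖exp(|A| t) b_Δ − ‖b_Δ‖ V̄ exp(H̄ t) e₁‖ ≤ ‖b_Δ‖ ε̄ t. Define μ = ‖b_Δ‖ V̄ exp(H̄ t) e₁ + (‖b_Δ‖ ε̄ t + ‖b_c‖ ε t) · 𝟙 ∈ ℝ^n, where 𝟙 is the all-ones vector. Then for every x ∈ ℝ^n with |x_i − (b_c)_i| ≤ (b_Δ)_i for all i, one has |(exp(A t) x − ‖b_c‖ V exp(H t) e₁)_i| ≤ μ_i for all i. -/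

import Mathlib

/-!
Split `exp(At) x − ‖b_c‖ V exp(Ht) e₁` as `exp(At)(x − b_c) + (exp(At) b_c − ‖b_c‖ V exp(Ht) e₁)`.
The second term is bounded componentwise by its Euclidean norm, hence by `‖b_c‖ ε t`. For the
first, `|exp(At)| ≤ exp(|A| t)` entrywise for `t ≥ 0` (compare the exponential series term by
term), so its components are bounded by those of `exp(|A| t) b_Δ`, which lie within `‖b_Δ‖ ε̄ t` of
`‖b_Δ‖ V̄ exp(H̄ t) e₁`.
-/

open Matrix

/-- Matrix exponential of a real square matrix. -/
noncomputable def mexp {m : ℕ} (A : Matrix (Fin m) (Fin m) ℝ) : Matrix (Fin m) (Fin m) ℝ :=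
  NormedSpace.exp A

/-- Euclidean norm of a vector in `ℝ^m`. -/
noncomputable def enorm₂ {m : ℕ} (x : Fin m → ℝ) : ℝ :=
  ‖(WithLp.toLp 2 x : EuclideanSpace ℝ (Fin m))‖

/-- First standard basis vector of `ℝ^ξ`. -/
noncomputable def e1 {ξ : ℕ} [NeZero ξ] : Fin ξ → ℝ := Pi.single 0 1

/-- Entrywise absolute value of a matrix. -/
def matAbs {m : ℕ} (A : Matrix (Fin m) (Fin m) ℝ) : Matrix (Fin m) (Fin m) ℝ :=
  Matrix.of fun i j => |A i j|

section EntrywiseDomination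

variable {ι R : Type*} [Fintype ι] [Ring R] [LinearOrder R] [IsStrictOrderedRing R]

theorem Matrix.abs_mulVec_apply_le {M C : Matrix ι ι R} {v w : ι → R}
    (hMC : ∀ i j, |M i j| ≤ C i j) (hvw : ∀ j, |v j| ≤ w j) (i : ι) :
    |(M *ᵥ v) i| ≤ (C *ᵥ w) i := by
  refine (Finset.abs_sum_le_sum_abs _ _).trans (Finset.sum_le_sum fun j _ => ?_)
  rw [abs_mul]
  exact mul_le_mul (hMC i j) (hvw j) (abs_nonneg _) ((abs_nonneg _).trans (hMC i j))

variable [DecidableEq ι]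

theorem Matrix.abs_pow_apply_le {B C : Matrix ι ι R} (hBC : ∀ i j, |B i j| ≤ C i j) (k : ℕ)
    (i j : ι) : |(B ^ k) i j| ≤ (C ^ k) i j := by
  induction k generalizing i j with
  | zero => by_cases h : i = j <;> simp [h]
  | succ k ih =>
    rw [pow_succ, pow_succ, mul_apply, mul_apply]
    refine (Finset.abs_sum_le_sum_abs _ _).trans (Finset.sum_le_sum fun l _ => ?_)
    rw [abs_mul]
    exact mul_le_mul (ih i l) (hBC l j) (abs_nonneg _) ((abs_nonneg _).trans (ih i l))

theorem Matrix.hasSum_exp_apply (B : Matrix ι ι ℝ) (i j : ι) :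
    HasSum (fun k : ℕ => (k.factorial : ℝ)⁻¹ * (B ^ k) i j) (NormedSpace.exp B i j) := by
  let _ : NormedRing (Matrix ι ι ℝ) := Matrix.linftyOpNormedRing
  let _ : NormedAlgebra ℝ (Matrix ι ι ℝ) := Matrix.linftyOpNormedAlgebra
  exact Pi.hasSum.1 (Pi.hasSum.1 (NormedSpace.exp_series_hasSum_exp' (𝕂 := ℝ) B) i) j

theorem Matrix.abs_exp_apply_le {B C : Matrix ι ι ℝ} (hBC : ∀ i j, |B i j| ≤ C i j) (i j : ι) :
    |NormedSpace.exp B i j| ≤ NormedSpace.exp C i j := by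
  have hterm (k : ℕ) :
      |(k.factorial : ℝ)⁻¹ * (B ^ k) i j| ≤ (k.factorial : ℝ)⁻¹ * (C ^ k) i j := by
    rw [abs_mul, abs_of_nonneg (by positivity)]
    exact mul_le_mul_of_nonneg_left (abs_pow_apply_le hBC k i j) (by positivity)
  refine abs_le.mpr ⟨?_, ?_⟩
  · exact hasSum_le (fun k => neg_le_of_abs_le (hterm k)) (hasSum_exp_apply C i j).neg
      (hasSum_exp_apply B i j)
  · exact hasSum_le (fun k => (le_abs_self _).trans (hterm k)) (hasSum_exp_apply B i j)
      (hasSum_exp_apply C i j)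

end EntrywiseDomination

theorem abs_mexp_smul_apply_le {m : ℕ} (A : Matrix (Fin m) (Fin m) ℝ) {t : ℝ} (ht : 0 ≤ t)
    (i j : Fin m) : |mexp (t • A) i j| ≤ mexp (t • matAbs A) i j :=
  abs_exp_apply_le (fun a b => by simp [matAbs, abs_mul, abs_of_nonneg ht]) i j

theorem abs_apply_le_enorm₂ {m : ℕ} (v : Fin m → ℝ) (i : Fin m) : |v i| ≤ enorm₂ v :=
  PiLp.norm_apply_le (WithLp.toLp 2 v) i

theorem stmt4_general {n ξ : ℕ} [NeZero ξ]
    (A : Matrix (Fin n) (Fin n) ℝ) (t : ℝ) (ht : 0 ≤ t)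
    (bc bΔ : Fin n → ℝ)
    (V : Matrix (Fin n) (Fin ξ) ℝ) (H : Matrix (Fin ξ) (Fin ξ) ℝ) (ε : ℝ)
    (Vbar : Matrix (Fin n) (Fin ξ) ℝ) (Hbar : Matrix (Fin ξ) (Fin ξ) ℝ)
    (εbar : ℝ)
    (hc : enorm₂ (mexp (t • A) *ᵥ bc - enorm₂ bc • (V *ᵥ (mexp (t • H) *ᵥ e1)))
        ≤ enorm₂ bc * ε * t)
    (hΔ : enorm₂ (mexp (t • matAbs A) *ᵥ bΔ
          - enorm₂ bΔ • (Vbar *ᵥ (mexp (t • Hbar) *ᵥ e1)))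
        ≤ enorm₂ bΔ * εbar * t)
    (μ : Fin n → ℝ)
    (hμ : μ = enorm₂ bΔ • (Vbar *ᵥ (mexp (t • Hbar) *ᵥ e1))
        + (enorm₂ bΔ * εbar * t + enorm₂ bc * ε * t) • (fun _ => (1 : ℝ)))
    (x : Fin n → ℝ) (hx : ∀ i, |x i - bc i| ≤ bΔ i) :
    ∀ i, |(mexp (t • A) *ᵥ x - enorm₂ bc • (V *ᵥ (mexp (t • H) *ᵥ e1))) i| ≤ μ i := by
  intro i
  set E := mexp (t • A)
  set c := enorm₂ bc • (V *ᵥ (mexp (t • H) *ᵥ e1))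
  set w := enorm₂ bΔ • (Vbar *ᵥ (mexp (t • Hbar) *ᵥ e1))
  have hsplit : (E *ᵥ x - c) i = (E *ᵥ (x - bc)) i + (E *ᵥ bc - c) i := by
    simp only [mulVec_sub, Pi.sub_apply]; ring
  have hbox : |(E *ᵥ (x - bc)) i| ≤ (mexp (t • matAbs A) *ᵥ bΔ) i :=
    abs_mulVec_apply_le (abs_mexp_smul_apply_le A ht) hx i
  have hwidth : (mexp (t • matAbs A) *ᵥ bΔ) i - w i ≤ enorm₂ bΔ * εbar * t :=
    (le_abs_self _).trans ((abs_apply_le_enorm₂ (mexp (t • matAbs A) *ᵥ bΔ - w) i).trans hΔ)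
  have hcenter : |(E *ᵥ bc - c) i| ≤ enorm₂ bc * ε * t :=
    (abs_apply_le_enorm₂ _ i).trans hc
  rw [hsplit, hμ]
  simp only [Pi.add_apply, Pi.smul_apply, smul_eq_mul, mul_one]
  linarith [abs_add_le ((E *ᵥ (x - bc)) i) ((E *ᵥ bc - c) i)]

/-- Interval vector multiplication in the Krylov subspace:
for every `x` in the box `[b_c − b_Δ, b_c + b_Δ]`, the deviation of `exp(A t) x` from
the Krylov approximation `‖b_c‖ V exp(H t) e₁` is componentwise bounded by
`μ = ‖b_Δ‖ V̄ exp(H̄ t) e₁ + (‖b_Δ‖ ε̄ t + ‖b_c‖ ε t) 𝟙`. -/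
theorem stmt4 {n ξ : ℕ} [NeZero ξ]
    (A : Matrix (Fin n) (Fin n) ℝ) (t : ℝ) (ht : 0 ≤ t)
    (bc bΔ : Fin n → ℝ) (hbΔ : ∀ i, 0 ≤ bΔ i)
    (V : Matrix (Fin n) (Fin ξ) ℝ) (H : Matrix (Fin ξ) (Fin ξ) ℝ) (ε : ℝ) (hε : 0 ≤ ε)
    (Vbar : Matrix (Fin n) (Fin ξ) ℝ) (Hbar : Matrix (Fin ξ) (Fin ξ) ℝ)
    (εbar : ℝ) (hεbar : 0 ≤ εbar)
    (hc : enorm₂ (mexp (t • A) *ᵥ bc - enorm₂ bc • (V *ᵥ (mexp (t • H) *ᵥ e1)))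
        ≤ enorm₂ bc * ε * t)
    (hΔ : enorm₂ (mexp (t • matAbs A) *ᵥ bΔ
          - enorm₂ bΔ • (Vbar *ᵥ (mexp (t • Hbar) *ᵥ e1)))
        ≤ enorm₂ bΔ * εbar * t)
    (μ : Fin n → ℝ)
    (hμ : μ = enorm₂ bΔ • (Vbar *ᵥ (mexp (t • Hbar) *ᵥ e1))
        + (enorm₂ bΔ * εbar * t + enorm₂ bc * ε * t) • (fun _ => (1 : ℝ)))
    (x : Fin n → ℝ) (hx : ∀ i, |x i - bc i| ≤ bΔ i) :
    ∀ i, |(mexp (t • A) *ᵥ x - enorm₂ bc • (V *ᵥ (mexp (t • H) *ᵥ e1))) i| ≤ μ i :=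
  stmt4_general A t ht bc bΔ V H ε Vbar Hbar εbar hc hΔ μ hμ x hx
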